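/- arXiv:2010.04239 — 3 statements merged into one kernel-verified Lean document; each statement's English description precedes it below -/
import Mathlib

section
/- Let X be a finite alphabet, φ : X → [0,∞) a cost function, and A ≥ 0 such that there exists a probability mass function p on X with ∑_x p(x)φ(x) ≤ A. Then for every n ≥ 1, |{x^n ∈ X^n : (1/n)∑_{t=1}^n φ(x_t) ≤ A}| ≤ (n+1)^{|X|} · 2^{n C}, where C = max{ H(p) : p a probability mass function on X with ∑_x p(x)φ(x) ≤ A }. -/
/-!
Method of types. Group the admissible words by their type, i.e. their vector of letter counts;
there are at most `(n+1)^{|X|}` types. Under the i.i.d. law of a type `p`, every word of type `p`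
has probability `2^{-n H(p)}`, so the type class of `p` has at most `2^{n H(p)}` words. The type
of an admissible word is itself a pmf of expected cost at most `A`, hence `H(p) ≤ C`.
-/

open Finset

/-- Shannon entropy (base 2) of a probability mass function on a finite alphabet,
with the convention `0 · log₂ 0 = 0` (automatic since `Real.logb 2 0 = 0`). -/
noncomputable def shannonEntropy {X : Type*} [Fintype X] (p : X → ℝ) : ℝ :=
  -∑ x, p x * Real.logb 2 (p x)

namespace MethodOfTypes

variable {X : Type*} {n : ℕ}

theorem sum_prod_le_one [Fintype X] {q : X → ℝ} (hq0 : ∀ a, 0 ≤ q a) (hq1 : ∑ a, q a = 1)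
    (T : Finset (Fin n → X)) : ∑ y ∈ T, ∏ t, q (y t) ≤ 1 :=
  calc ∑ y ∈ T, ∏ t, q (y t)
      ≤ ∑ y : Fin n → X, ∏ t, q (y t) :=
        sum_le_sum_of_subset_of_nonneg (subset_univ T) fun y _ _ => prod_nonneg fun t _ => hq0 _
    _ = ∏ _t : Fin n, ∑ a, q a := by rw [prod_univ_sum, Fintype.piFinset_univ]
    _ = 1 := by simp [hq1]

variable [DecidableEq X]

def typeCount (x : Fin n → X) (a : X) : ℕ := #{t | x t = a}

noncomputable def empiricalDist (x : Fin n → X) (a : X) : ℝ := typeCount x a / n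

theorem typeCount_le (x : Fin n → X) (a : X) : typeCount x a ≤ n :=
  (card_filter_le _ _).trans (card_fin n).le

theorem sum_typeCount [Fintype X] (x : Fin n → X) : ∑ a, typeCount x a = n := by
  simp [typeCount, ← card_eq_sum_card_fiberwise fun t (_ : t ∈ univ) => mem_univ (x t)]

theorem sum_comp_eq_sum_typeCount_mul [Fintype X] (x : Fin n → X) (g : X → ℝ) :
    ∑ t, g (x t) = ∑ a, typeCount x a * g a := by
  simp only [← sum_fiberwise' univ x g, sum_const, nsmul_eq_mul, typeCount]

theorem prod_comp_eq_prod_pow_typeCount [Fintype X] (x : Fin n → X) (g : X → ℝ) :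
    ∏ t, g (x t) = ∏ a, g a ^ typeCount x a := by
  simp only [← prod_fiberwise' univ x g, prod_const, typeCount]

theorem empiricalDist_nonneg (x : Fin n → X) (a : X) : 0 ≤ empiricalDist x a := by
  unfold empiricalDist; positivity

theorem sum_empiricalDist [Fintype X] (hn : n ≠ 0) (x : Fin n → X) :
    ∑ a, empiricalDist x a = 1 := by
  simp only [empiricalDist, ← sum_div]
  rw [← Nat.cast_sum, sum_typeCount, div_self (Nat.cast_ne_zero.mpr hn)]

theorem sum_empiricalDist_mul [Fintype X] (x : Fin n → X) (g : X → ℝ) :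
    ∑ a, empiricalDist x a * g a = (∑ t, g (x t)) / n := by
  simp only [sum_comp_eq_sum_typeCount_mul x g, sum_div, empiricalDist]
  exact sum_congr rfl fun a _ => by ring

theorem pow_typeCount_eq_two_rpow (hn : n ≠ 0) (x : Fin n → X) (a : X) :
    empiricalDist x a ^ typeCount x a =
      (2 : ℝ) ^ (n * (empiricalDist x a * Real.logb 2 (empiricalDist x a))) := by
  rcases Nat.eq_zero_or_pos (typeCount x a) with h0 | hpos
  · simp [empiricalDist, h0]
  · have hp : 0 < empiricalDist x a := by unfold empiricalDist; positivity
    have hk : (n : ℝ) * empiricalDist x a = typeCount x a := by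
      unfold empiricalDist; field_simp
    rw [← mul_assoc, hk, mul_comm, Real.rpow_mul zero_le_two,
      Real.rpow_logb two_pos (by norm_num) hp, Real.rpow_natCast]

theorem prod_empiricalDist_of_typeCount_eq [Fintype X] (hn : n ≠ 0) {x y : Fin n → X}
    (h : typeCount y = typeCount x) :
    ∏ t, empiricalDist x (y t) = (2 : ℝ) ^ (-(n * shannonEntropy (empiricalDist x))) := by
  rw [prod_comp_eq_prod_pow_typeCount, h, shannonEntropy, mul_neg, neg_neg, mul_sum,
    Real.rpow_sum_of_pos two_pos]
  exact prod_congr rfl fun a _ => pow_typeCount_eq_two_rpow hn x a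

theorem card_typeClass_le [Fintype X] (hn : n ≠ 0) (x : Fin n → X) :
    (#{y : Fin n → X | typeCount y = typeCount x} : ℝ) ≤
      (2 : ℝ) ^ (n * shannonEntropy (empiricalDist x)) := by
  set H := shannonEntropy (empiricalDist x)
  have hmass : #{y : Fin n → X | typeCount y = typeCount x} * (2 : ℝ) ^ (-(n * H)) ≤ 1 := by
    rw [← nsmul_eq_mul, ← sum_const, sum_congr rfl fun y hy =>
      (prod_empiricalDist_of_typeCount_eq hn (mem_filter.mp hy).2).symm]
    exact sum_prod_le_one (empiricalDist_nonneg x) (sum_empiricalDist hn x) _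
  rwa [Real.rpow_neg zero_le_two, ← div_eq_mul_inv, div_le_one (by positivity)] at hmass

theorem card_le_of_card_typeClass_le [Fintype X] (S : Finset (Fin n → X)) {B : ℝ}
    (hB : 0 ≤ B) (h : ∀ x ∈ S, (#{y : Fin n → X | typeCount y = typeCount x} : ℝ) ≤ B) :
    (#S : ℝ) ≤ ((n : ℝ) + 1) ^ Fintype.card X * B := by
  have hmaps : Set.MapsTo typeCount (S : Set (Fin n → X))
      (Fintype.piFinset fun _ : X => range (n + 1) : Set (X → ℕ)) :=
    fun x _ => mem_coe.mpr <| Fintype.mem_piFinset.mpr fun a =>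
      mem_range.mpr (Nat.lt_add_one_iff.mpr (typeCount_le x a))
  have hfiber : ∀ c : X → ℕ, (#{x ∈ S | typeCount x = c} : ℝ) ≤ B := by
    intro c
    rcases Finset.eq_empty_or_nonempty {x ∈ S | typeCount x = c} with hempty | ⟨x, hx⟩
    · simpa [hempty] using hB
    obtain ⟨hxS, rfl⟩ := mem_filter.mp hx
    calc (#{x' ∈ S | typeCount x' = typeCount x} : ℝ)
        ≤ #{y : Fin n → X | typeCount y = typeCount x} := by
          exact_mod_cast card_le_card (filter_subset_filter _ (subset_univ S))
      _ ≤ B := h x hxS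
  rw [card_eq_sum_card_fiberwise hmaps, Nat.cast_sum]
  calc _ ≤ ∑ _c ∈ Fintype.piFinset fun _ => range (n + 1), B := sum_le_sum fun c _ => hfiber c
    _ = _ := by simp

end MethodOfTypes

open MethodOfTypes in
theorem constraint_set_card_le_general
    {X : Type*} [Fintype X]
    (φ : X → ℝ) (A : ℝ)
    (C : ℝ)
    (hC : IsGreatest { h : ℝ | ∃ p : X → ℝ, (∀ x, 0 ≤ p x) ∧ (∑ x, p x = 1) ∧
        (∑ x, p x * φ x ≤ A) ∧ h = shannonEntropy p } C)
    (n : ℕ) (hn : 1 ≤ n) :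
    ({x : Fin n → X | (∑ t, φ (x t)) / n ≤ A}.ncard : ℝ) ≤
      ((n : ℝ) + 1) ^ (Fintype.card X) * (2 : ℝ) ^ ((n : ℝ) * C) := by
  classical
  have hn0 : n ≠ 0 := Nat.one_le_iff_ne_zero.mp hn
  set S : Finset (Fin n → X) := {x | (∑ t, φ (x t)) / n ≤ A}
  rw [show {x : Fin n → X | (∑ t, φ (x t)) / n ≤ A} = S by ext; simp [S],
    Set.ncard_coe_finset]
  refine card_le_of_card_typeClass_le S (by positivity) fun x hx => ?_
  have hentropy : shannonEntropy (empiricalDist x) ≤ C :=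
    hC.2 ⟨_, empiricalDist_nonneg x, sum_empiricalDist hn0 x,
      (sum_empiricalDist_mul x φ).trans_le (mem_filter.mp hx).2, rfl⟩
  calc _ ≤ (2 : ℝ) ^ ((n : ℝ) * shannonEntropy (empiricalDist x)) := card_typeClass_le hn0 x
    _ ≤ 2 ^ ((n : ℝ) * C) := by gcongr; norm_num

/-- The number of sequences in `X^n` satisfying the average input-cost constraint `A` is at most
`(n+1)^{|X|} · 2^{nC}`, where `C` is the maximal entropy of a pmf on `X` with expected cost
at most `A`. -/
theorem constraint_set_card_le
    {X : Type*} [Fintype X]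
    (φ : X → ℝ) (hφ : ∀ x, 0 ≤ φ x) (A : ℝ) (hA : 0 ≤ A)
    (C : ℝ)
    (hC : IsGreatest { h : ℝ | ∃ p : X → ℝ, (∀ x, 0 ≤ p x) ∧ (∑ x, p x = 1) ∧
        (∑ x, p x * φ x ≤ A) ∧ h = shannonEntropy p } C)
    (n : ℕ) (hn : 1 ≤ n) :
    ({x : Fin n → X | (∑ t, φ (x t)) / n ≤ A}.ncard : ℝ) ≤
      ((n : ℝ) + 1) ^ (Fintype.card X) * (2 : ℝ) ^ ((n : ℝ) * C) :=
  constraint_set_card_le_general φ A C hC n hn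
end

section
/- Let W be a DMC with finite alphabets X, Y, let φ : X → [0,∞) be a cost function and A ≥ 0 such that the constraint set of distributions is nonempty, and set C = max{ H(p) : p a pmf on X with ∑_x p(x)φ(x) ≤ A }. If u_1,…,u_M ∈ X^n satisfy (1/n)∑_{t=1}^n φ(u_i(t)) ≤ A for all i, and D_1,…,D_M ⊆ Y^n satisfy W^n(D_i^c | u_i) ≤ λ1 for all i and W^n(D_j | u_i) ≤ λ2 for all i ≠ j, with λ1 + λ2 < 1, then log₂ M ≤ n·C + |X|·log₂(n+1). -/
/-!
If `u i = u j` with `i ≠ j`, then `1 = W^n(D_j | u_i) + W^n(D_jᶜ | u_i) ≤ λ₂ + λ₁`, so the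
codewords are distinct. The empirical distribution (type) of each codeword satisfies the cost
constraint, so its entropy is at most `C`. A type class of entropy `H` has at most `2^{nH}`
elements, since each of its sequences has mass `2^{-nH}` under the i.i.d. law of that type, and
there are at most `(n+1)^{|X|}` types; hence `M ≤ (n+1)^{|X|} 2^{nC}`.
-/

open Finset

/-- The probability `W^n(D | x^n)` that the output of the `n`-fold memoryless extension of the
channel `W`, on input `x^n`, lies in the set `D ⊆ Y^n`. -/
def channelPr {X Y : Type*} [Fintype Y] (W : X → Y → ℝ) {n : ℕ}
    (x : Fin n → X) (D : Finset (Fin n → Y)) : ℝ :=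
  ∑ y ∈ D, ∏ t, W (x t) (y t)

section Channel

variable {X Y : Type*} [Fintype Y] [DecidableEq Y] {W : X → Y → ℝ}

lemma channelPr_add_channelPr_compl (hW1 : ∀ x, ∑ y, W x y = 1) {n : ℕ} (x : Fin n → X)
    (D : Finset (Fin n → Y)) : channelPr W x D + channelPr W x Dᶜ = 1 := by
  rw [channelPr, channelPr, sum_add_sum_compl, ← Fintype.prod_sum]
  simp [hW1]

lemma codewords_injective (hW1 : ∀ x, ∑ y, W x y = 1) {n M : ℕ} {u : Fin M → Fin n → X}
    {D : Fin M → Finset (Fin n → Y)} {lam1 lam2 : ℝ} (hlam : lam1 + lam2 < 1)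
    (h1 : ∀ i, channelPr W (u i) (D i)ᶜ ≤ lam1)
    (h2 : ∀ i j, i ≠ j → channelPr W (u i) (D j) ≤ lam2) :
    Function.Injective u := by
  intro i j hij
  by_contra hne
  have hcompl : channelPr W (u i) (D j)ᶜ ≤ lam1 := hij ▸ h1 j
  linarith [channelPr_add_channelPr_compl hW1 (u i) (D j), h2 i j hne]

end Channel

lemma shannonEntropy_nonneg {X : Type*} [Fintype X] {p : X → ℝ} (h0 : ∀ x, 0 ≤ p x)
    (h1 : ∑ x, p x = 1) : 0 ≤ shannonEntropy p := by
  rw [shannonEntropy, neg_nonneg]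
  refine sum_nonpos fun x _ =>
    mul_nonpos_of_nonneg_of_nonpos (h0 x) (Real.logb_nonpos one_lt_two (h0 x) ?_)
  rw [← h1]
  exact single_le_sum (fun a _ => h0 a) (mem_univ x)

section Types

variable {X : Type*} [DecidableEq X] {n : ℕ}

def letterCount (x : Fin n → X) (a : X) : ℕ := #{t | x t = a}

/-- For `n = 0` this is the zero function (division by zero), not a probability vector. -/
noncomputable def empiricalDist (x : Fin n → X) (a : X) : ℝ := letterCount x a / n

lemma empiricalDist_nonneg (x : Fin n → X) (a : X) : 0 ≤ empiricalDist x a := by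
  unfold empiricalDist
  positivity

lemma letterCount_le (x : Fin n → X) (a : X) : letterCount x a ≤ n :=
  (card_filter_le _ _).trans_eq (card_fin n)

lemma letterCount_eq_mul_empiricalDist (x : Fin n → X) (a : X) :
    (letterCount x a : ℝ) = n * empiricalDist x a := by
  rcases n.eq_zero_or_pos with rfl | hn
  · simp [Nat.le_zero.mp (letterCount_le x a)]
  · rw [empiricalDist, mul_div_cancel₀ _ (by positivity)]

variable [Fintype X]

lemma sum_empiricalDist_mul (x : Fin n → X) (f : X → ℝ) :
    ∑ a, empiricalDist x a * f a = (∑ t, f (x t)) / n := by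
  rw [← sum_fiberwise' univ x f, sum_div]
  refine sum_congr rfl fun a _ => ?_
  rw [sum_const, nsmul_eq_mul, empiricalDist, letterCount, div_mul_eq_mul_div]

lemma sum_empiricalDist (hn : 0 < n) (x : Fin n → X) : ∑ a, empiricalDist x a = 1 := by
  simpa [Fintype.card_fin, hn.ne'] using sum_empiricalDist_mul x (fun _ => 1)

lemma prod_apply_eq_prod_pow_letterCount (x : Fin n → X) (g : X → ℝ) :
    ∏ t, g (x t) = ∏ a, g a ^ letterCount x a := by
  rw [← prod_fiberwise' univ x g]
  exact prod_congr rfl fun a _ => by rw [prod_const, letterCount]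

lemma prod_empiricalDist_pow_letterCount (x : Fin n → X) :
    ∏ a, empiricalDist x a ^ letterCount x a = 2 ^ (-(n * shannonEntropy (empiricalDist x))) := by
  have hfactor (a : X) : empiricalDist x a ^ letterCount x a
      = 2 ^ (n * (empiricalDist x a * Real.logb 2 (empiricalDist x a))) := by
    rcases (letterCount x a).eq_zero_or_pos with h | h
    · simp [empiricalDist, h]
    · have hpos : 0 < empiricalDist x a := by
        unfold empiricalDist
        have : (0 : ℝ) < letterCount x a := by exact_mod_cast h
        have : (0 : ℝ) < n := by exact_mod_cast h.trans_le (letterCount_le x a)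
        positivity
      rw [← mul_assoc, ← letterCount_eq_mul_empiricalDist, mul_comm, Real.rpow_mul zero_le_two,
        Real.rpow_logb zero_lt_two (by norm_num) hpos, Real.rpow_natCast]
  rw [prod_congr rfl fun a _ => hfactor a, ← Real.rpow_sum_of_pos zero_lt_two, ← mul_sum,
    shannonEntropy, mul_neg, neg_neg]

def typeClass (x : Fin n → X) : Finset (Fin n → X) := {y | letterCount y = letterCount x}

lemma card_typeClass_le (x : Fin n → X) :
    (#(typeClass x) : ℝ) ≤ 2 ^ (n * shannonEntropy (empiricalDist x)) := by
  set P := empiricalDist x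
  have hmass : ∀ y ∈ typeClass x, ∏ t, P (y t) = 2 ^ (-(n * shannonEntropy P)) := by
    intro y hy
    rw [prod_apply_eq_prod_pow_letterCount, (mem_filter.mp hy).2,
      prod_empiricalDist_pow_letterCount]
  have htotal : ∑ y : Fin n → X, ∏ t, P (y t) = 1 := by
    rw [← Fintype.prod_sum, prod_const, card_univ, Fintype.card_fin]
    rcases n.eq_zero_or_pos with rfl | hn
    · exact pow_zero _
    · rw [sum_empiricalDist hn, one_pow]
  have hle : #(typeClass x) * (2 : ℝ) ^ (-(n * shannonEntropy P)) ≤ 1 := by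
    rw [← htotal, ← nsmul_eq_mul, ← sum_const, ← sum_congr rfl hmass]
    exact sum_le_sum_of_subset_of_nonneg (subset_univ _)
      fun y _ _ => prod_nonneg fun t _ => empiricalDist_nonneg x (y t)
  rwa [Real.rpow_neg zero_le_two, ← div_eq_mul_inv, div_le_one (by positivity)] at hle

lemma card_image_letterCount_le (S : Finset (Fin n → X)) :
    #(S.image letterCount) ≤ (n + 1) ^ Fintype.card X := by
  have hsub : S.image letterCount ⊆ Fintype.piFinset fun _ : X => range (n + 1) := by
    intro c hc
    obtain ⟨x, -, rfl⟩ := mem_image.mp hc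
    exact Fintype.mem_piFinset.mpr fun a => mem_range_succ_iff.mpr (letterCount_le x a)
  simpa using card_le_card hsub

theorem card_le_of_mul_shannonEntropy_empiricalDist_le (S : Finset (Fin n → X)) {B : ℝ}
    (hS : ∀ x ∈ S, n * shannonEntropy (empiricalDist x) ≤ B) :
    (#S : ℝ) ≤ ((n : ℝ) + 1) ^ Fintype.card X * 2 ^ B := by
  have hfiber : ∀ c ∈ S.image letterCount, (#{x ∈ S | letterCount x = c} : ℝ) ≤ 2 ^ B := by
    intro c hc
    obtain ⟨x, hxS, rfl⟩ := mem_image.mp hc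
    calc (#{y ∈ S | letterCount y = letterCount x} : ℝ)
        ≤ #(typeClass x) := by
          exact_mod_cast card_le_card (filter_subset_filter _ (subset_univ S))
      _ ≤ 2 ^ (n * shannonEntropy (empiricalDist x)) := card_typeClass_le x
      _ ≤ 2 ^ B := Real.rpow_le_rpow_of_exponent_le one_le_two (hS x hxS)
  calc (#S : ℝ) = ∑ c ∈ S.image letterCount, (#{x ∈ S | letterCount x = c} : ℝ) := by
        exact_mod_cast card_eq_sum_card_image letterCount S
    _ ≤ #(S.image letterCount) * 2 ^ B := by
        simpa using sum_le_card_nsmul _ _ _ hfiber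
    _ ≤ ((n : ℝ) + 1) ^ Fintype.card X * 2 ^ B := by
        gcongr
        exact_mod_cast card_image_letterCount_le S

end Types

lemma logb_two_le_add_of_le_pow_mul_rpow {M k : ℕ} {N B : ℝ} (hN : 1 ≤ N) (hB : 0 ≤ B)
    (hM : (M : ℝ) ≤ N ^ k * 2 ^ B) : Real.logb 2 M ≤ B + k * Real.logb 2 N := by
  have hlogN : 0 ≤ Real.logb 2 N := Real.logb_nonneg one_lt_two hN
  rcases M.eq_zero_or_pos with rfl | hMpos
  · simpa using add_nonneg hB (mul_nonneg k.cast_nonneg hlogN)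
  calc Real.logb 2 M ≤ Real.logb 2 (N ^ k * 2 ^ B) :=
        Real.logb_le_logb_of_le one_lt_two (by exact_mod_cast hMpos) hM
    _ = B + k * Real.logb 2 N := by
        rw [Real.logb_mul (by positivity) (by positivity), Real.logb_pow,
          Real.logb_rpow zero_lt_two (by norm_num), add_comm]

theorem DI_converse_rate_bound_general
    {X Y : Type*} [Fintype X] [Fintype Y] [DecidableEq Y]
    (W : X → Y → ℝ) (hW1 : ∀ x, ∑ y, W x y = 1)
    (φ : X → ℝ) (A : ℝ)
    (C : ℝ)
    (hC : IsGreatest { h : ℝ | ∃ p : X → ℝ, (∀ x, 0 ≤ p x) ∧ (∑ x, p x = 1) ∧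
        (∑ x, p x * φ x ≤ A) ∧ h = shannonEntropy p } C)
    (n M : ℕ) (u : Fin M → Fin n → X) (D : Fin M → Finset (Fin n → Y))
    (hcost : ∀ i, (∑ t, φ (u i t)) / n ≤ A)
    (lam1 lam2 : ℝ) (hlam : lam1 + lam2 < 1)
    (h1 : ∀ i, channelPr W (u i) (D i)ᶜ ≤ lam1)
    (h2 : ∀ i j, i ≠ j → channelPr W (u i) (D j) ≤ lam2) :
    Real.logb 2 M ≤ (n : ℝ) * C + (Fintype.card X : ℝ) * Real.logb 2 ((n : ℝ) + 1) := by
  classical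
  have hentropy : ∀ x ∈ univ.image u, n * shannonEntropy (empiricalDist x) ≤ n * C := by
    simp only [mem_image, mem_univ, true_and, forall_exists_index, forall_apply_eq_imp_iff]
    intro i
    rcases n.eq_zero_or_pos with rfl | hn
    · simp
    · refine mul_le_mul_of_nonneg_left (hC.2 ⟨_, empiricalDist_nonneg _, sum_empiricalDist hn _,
        ?_, rfl⟩) n.cast_nonneg
      exact (sum_empiricalDist_mul _ φ).trans_le (hcost i)
  have hM : (M : ℝ) ≤ ((n : ℝ) + 1) ^ Fintype.card X * 2 ^ (n * C) := by
    have hcard := card_le_of_mul_shannonEntropy_empiricalDist_le _ hentropy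
    rwa [card_image_of_injective _ (codewords_injective hW1 hlam h1 h2), card_univ,
      Fintype.card_fin] at hcard
  obtain ⟨p, hp0, hp1, -, hCp⟩ := hC.1
  have hC0 : 0 ≤ C := hCp ▸ shannonEntropy_nonneg hp0 hp1
  exact logb_two_le_add_of_le_pow_mul_rpow (by simp) (mul_nonneg n.cast_nonneg hC0) hM

/-- Converse bound: the rate of a deterministic identification code under input constraint `A`
with `lam1 + lam2 < 1` is bounded as `log₂ M ≤ n·C + |X|·log₂(n+1)`, where
`C = max { H(p) : pmf p on X with expected cost ≤ A }`. -/
theorem DI_converse_rate_bound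
    {X Y : Type*} [Fintype X] [Fintype Y] [DecidableEq Y]
    (W : X → Y → ℝ) (hW0 : ∀ x y, 0 ≤ W x y) (hW1 : ∀ x, ∑ y, W x y = 1)
    (φ : X → ℝ) (hφ : ∀ x, 0 ≤ φ x) (A : ℝ) (hA : 0 ≤ A)
    (C : ℝ)
    (hC : IsGreatest { h : ℝ | ∃ p : X → ℝ, (∀ x, 0 ≤ p x) ∧ (∑ x, p x = 1) ∧
        (∑ x, p x * φ x ≤ A) ∧ h = shannonEntropy p } C)
    (n M : ℕ) (u : Fin M → Fin n → X) (D : Fin M → Finset (Fin n → Y))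
    (hcost : ∀ i, (∑ t, φ (u i t)) / n ≤ A)
    (lam1 lam2 : ℝ) (hlam : lam1 + lam2 < 1)
    (h1 : ∀ i, channelPr W (u i) (D i)ᶜ ≤ lam1)
    (h2 : ∀ i j, i ≠ j → channelPr W (u i) (D j) ≤ lam2) :
    Real.logb 2 M ≤ (n : ℝ) * C + (Fintype.card X : ℝ) * Real.logb 2 ((n : ℝ) + 1) :=
  DI_converse_rate_bound_general W hW1 φ A C hC n M u D hcost lam1 lam2 hlam h1 h2
end

section
/- Conditional type-class intersection lemma: let W be a DMC with finite alphabets X, Y whose channel matrix has pairwise distinct rows (i.e., for x ≠ x' there exists y with W(y|x) ≠ W(y|x')), let p be a pmf on X, and let ε > 0. Then there exist L(ε) > 0 and δ₀ > 0 such that for every δ ∈ (0, δ₀] and all sufficiently large n: for all x^n, x'^n ∈ T_δ(p) with d_H(x^n, x'^n) ≥ nε, one has |T_δ(W|x^n) ∩ T_δ(W|x'^n)| ≤ e^{−nL(ε)} · |T_δ(W|x^n)|. -/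
open Finset

/-- Number of occurrences `N(a | x^n)` of the letter `a` in the sequence `x^n`. -/
def occCount {X : Type*} [DecidableEq X] {n : ℕ} (x : Fin n → X) (a : X) : ℕ :=
  (Finset.univ.filter (fun t => x t = a)).card

/-- Number of joint occurrences `N(a, b | x^n, y^n)` of the pair `(a, b)` in `(x^n, y^n)`. -/
def jointCount {X Y : Type*} [DecidableEq X] [DecidableEq Y] {n : ℕ}
    (x : Fin n → X) (y : Fin n → Y) (a : X) (b : Y) : ℕ :=
  (Finset.univ.filter (fun t => x t = a ∧ y t = b)).card

/-- The `δ`-typical set `T_δ(p)` of sequences in `X^n`. -/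
def typicalSet {X : Type*} [DecidableEq X] (p : X → ℝ) (δ : ℝ) (n : ℕ) :
    Set (Fin n → X) :=
  {x | ∀ a : X, (0 < p a → |(occCount x a : ℝ) / n - p a| ≤ δ) ∧
    (p a = 0 → occCount x a = 0)}

/-- The conditionally `δ`-typical set `T_δ(W | x^n)` of output sequences in `Y^n`. -/
def condTypicalSet {X Y : Type*} [DecidableEq X] [DecidableEq Y]
    (W : X → Y → ℝ) (δ : ℝ) {n : ℕ} (x : Fin n → X) : Set (Fin n → Y) :=
  {y | ∀ a : X, ∀ b : Y,
    |(jointCount x y a b : ℝ) / n - ((occCount x a : ℝ) / n) * W a b| ≤ δ ∧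
    (W a b = 0 → jointCount x y a b = 0)}

/-!
Let `Wⁿ(y | x) = ∏ₜ W(xₜ, yₜ)`. On `T_δ(W|x)` the logarithm of `Wⁿ(y | x)` is within `nδC` of a
constant, `C = Σ |log W(a, b)|`, and by Hoeffding's inequality `T_δ(W|x)` has `Wⁿ(· | x)`-mass at
least `1/2`; so a subset of `T_δ(W|x)` of mass `m` has at most `2 m e^{2nδC} |T_δ(W|x)|` elements.

Since the rows of `W` are distinct, `Σₜ ‖W(xₜ, ·) - W(x'ₜ, ·)‖² ≥ c · d_H(x, x')` for some `c > 0`.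
Expanding the square, and using that `x, x'` have almost the same type, this forces some pair
`(a, b)` for which the `Wⁿ(· | x)`-mean `Σ_{t : x'ₜ = a} W(xₜ, b)` of `N(a, b | x', y)` is at
distance `≥ nγ`, with `γ` of order `cε / |X|`, from `N(a | x') W(a, b)`, the value that
`y ∈ T_δ(W|x')` pins down up to `nδ`.
Hence `T_δ(W|x) ∩ T_δ(W|x')` lies in a Hoeffding deviation event of mass `≤ 2e^{-nγ²/2}`.
-/

open MeasureTheory ProbabilityTheory Filter

lemma measureReal_abs_sum_ge_le_of_iIndepFun {Ω ι : Type*} [MeasurableSpace Ω] [Fintype ι] {μ : Measure Ω}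
    [IsFiniteMeasure μ] {V : ι → Ω → ℝ} (hV : iIndepFun V μ) {c : ι → NNReal}
    (hc : ∀ i, HasSubgaussianMGF (V i) (c i) μ) {s : ℝ} (hs : 0 ≤ s) :
    μ.real {ω | s ≤ |∑ i, V i ω|} ≤ 2 * Real.exp (-s ^ 2 / (2 * ∑ i, c i)) := by
  have hupper := HasSubgaussianMGF.measure_sum_ge_le_of_iIndepFun hV (s := univ)
    (fun i _ => hc i) hs
  have hlower := HasSubgaussianMGF.measure_sum_ge_le_of_iIndepFun
    (hV.comp (fun _ => Neg.neg) fun _ => measurable_neg) (s := univ) (fun i _ => (hc i).neg) hs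
  calc μ.real {ω | s ≤ |∑ i, V i ω|}
      ≤ μ.real ({ω | s ≤ ∑ i, V i ω} ∪ {ω | s ≤ ∑ i, (Neg.neg ∘ V i) ω}) := by
        refine measureReal_mono fun ω hω => ?_
        simp only [Set.mem_union, Set.mem_ofPred_eq, Function.comp_apply, sum_neg_distrib]
        exact (le_abs'.mp hω).symm.imp_right le_neg_of_le_neg
    _ ≤ _ := (measureReal_union_le _ _).trans (by linarith)

/-- Hoeffding's inequality for the product distribution `∏ i, w i (y i)` on `ι → Y`. -/
lemma sum_prod_abs_sum_sub_mean_ge_le {ι Y : Type*} [Fintype ι] [DecidableEq ι] [Fintype Y]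
    (w : ι → Y → ℝ) (hw0 : ∀ i b, 0 ≤ w i b) (hw1 : ∀ i, ∑ b, w i b = 1)
    (Z : ι → Y → ℝ) (hZ : ∀ i b, Z i b ∈ Set.Icc (0 : ℝ) 1) {s : ℝ} (hs : 0 ≤ s) :
    ∑ y : ι → Y with s ≤ |∑ i, (Z i (y i) - ∑ b, w i b * Z i b)|, ∏ i, w i (y i) ≤
      2 * Real.exp (-2 * s ^ 2 / Fintype.card ι) := by
  let _ : MeasurableSpace Y := ⊤
  let P : ι → PMF Y := fun i => PMF.ofFintype (fun b => ENNReal.ofReal (w i b)) (by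
    rw [← ENNReal.ofReal_sum_of_nonneg (fun b _ => hw0 i b), hw1, ENNReal.ofReal_one])
  have hP : ∀ i b, (P i b).toReal = w i b := fun i b => ENNReal.toReal_ofReal (hw0 i b)
  let μ := Measure.pi fun i => (P i).toMeasure
  have hmass : ∀ S : Finset (ι → Y), μ.real S = ∑ y ∈ S, ∏ i, w i (y i) := fun S => by
    rw [measureReal_def, ← sum_measure_singleton,
      ENNReal.toReal_sum fun y _ => measure_ne_top _ _]
    refine sum_congr rfl fun y _ => ?_
    simp only [μ, Measure.pi_singleton, ENNReal.toReal_prod,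
      PMF.toMeasure_apply_singleton _ _ (.of_discrete), hP]
  have hsub : ∀ i, HasSubgaussianMGF (fun y : ι → Y => Z i (y i) - ∑ b, w i b * Z i b)
      ((‖(1 : ℝ) - 0‖₊ / 2) ^ 2) μ := fun i => by
    have h := hasSubgaussianMGF_of_mem_Icc (μ := (P i).toMeasure) (X := Z i)
      (measurable_of_countable _).aemeasurable (ae_of_all _ (hZ i))
    rw [PMF.integral_eq_sum] at h
    simp only [hP, smul_eq_mul] at h
    rw [← (measurePreserving_eval (fun i => (P i).toMeasure) i).map_eq] at h
    exact HasSubgaussianMGF.of_map (μ := μ) (Y := fun y : ι → Y => y i)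
      (measurable_pi_apply i).aemeasurable h
  have hindep := iIndepFun_pi (μ := fun i => (P i).toMeasure)
    (X := fun i b => Z i b - ∑ b, w i b * Z i b) fun i => (measurable_of_countable _).aemeasurable
  rw [← hmass, coe_filter]
  simp only [mem_univ, true_and]
  refine (measureReal_abs_sum_ge_le_of_iIndepFun hindep hsub hs).trans_eq ?_
  norm_num [sum_const]
  ring

lemma sum_filter_le_sum_sum_filter {α ι : Type*} [Fintype α] {f : α → ℝ} (hf : ∀ y, 0 ≤ f y)
    {P : α → Prop} [DecidablePred P] {E : ι → α → Prop} [∀ i, DecidablePred (E i)]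
    (s : Finset ι) (h : ∀ y, P y → f y ≠ 0 → ∃ i ∈ s, E i y) :
    ∑ y with P y, f y ≤ ∑ i ∈ s, ∑ y with E i y, f y := by
  have hterm : ∀ y i, 0 ≤ if E i y then f y else 0 := fun y i => by
    split_ifs
    exacts [hf y, le_rfl]
  simp_rw [sum_filter]
  rw [sum_comm]
  refine sum_le_sum fun y _ => ?_
  split_ifs with hy
  · rcases (hf y).eq_or_lt with hfy | hfy
    · exact hfy.symm.trans_le (sum_nonneg fun i _ => hterm y i)
    obtain ⟨i, hi, hEi⟩ := h y hy hfy.ne'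
    calc f y = if E i y then f y else 0 := (if_pos hEi).symm
      _ ≤ _ := single_le_sum (f := fun i => if E i y then f y else 0) (fun j _ => hterm y j) hi
  · exact sum_nonneg fun i _ => hterm y i

lemma card_le_of_sum_bounds {α : Type*} {Q : α → ℝ} {S T : Finset α} (hST : S ⊆ T)
    {lo hi u : ℝ} (hlo : 0 < lo) (hQ : ∀ y ∈ T, Q y ∈ Set.Icc lo hi)
    (hT : 1 / 2 ≤ ∑ y ∈ T, Q y) (hS : ∑ y ∈ S, Q y ≤ u) :
    (#S : ℝ) ≤ 2 * u * (hi / lo) * #T := by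
  have hSlo : #S * lo ≤ u :=
    calc (#S : ℝ) * lo = ∑ _y ∈ S, lo := by rw [sum_const, nsmul_eq_mul]
      _ ≤ ∑ y ∈ S, Q y := sum_le_sum fun y hy => (hQ y (hST hy)).1
      _ ≤ u := hS
  have hThi : 1 ≤ 2 * (#T * hi) :=
    calc (1 : ℝ) ≤ 2 * ∑ y ∈ T, Q y := by linarith
      _ ≤ 2 * ∑ _y ∈ T, hi := by gcongr with y hy; exact (hQ y hy).2
      _ = 2 * (#T * hi) := by rw [sum_const, nsmul_eq_mul]
  have hu : 0 ≤ u / lo := div_nonneg ((by positivity : (0 : ℝ) ≤ #S * lo).trans hSlo) hlo.le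
  calc (#S : ℝ) ≤ u / lo := (le_div_iff₀ hlo).2 hSlo
    _ ≤ u / lo * (2 * (#T * hi)) := le_mul_of_one_le_right hu hThi
    _ = 2 * u * (hi / lo) * #T := by ring

lemma eventually_mul_exp_neg_le (K : ℝ) {r b : ℝ} (hr : 0 < r) (hb : 0 < b) :
    ∀ᶠ n : ℕ in atTop, K * Real.exp (-(n * r)) ≤ b := by
  have h : Tendsto (fun n : ℕ => K * Real.exp (-(n * r))) atTop (nhds 0) := by
    simpa using (Real.tendsto_exp_neg_atTop_nhds_zero.comp
      (tendsto_natCast_atTop_atTop.atTop_mul_const hr)).const_mul K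
  exact h.eventually (eventually_le_nhds hb)

lemma exists_pos_le_sum_sq_sub {X Y : Type*} [Fintype X] [Fintype Y] {W : X → Y → ℝ}
    (hrows : ∀ a a' : X, a ≠ a' → ∃ b, W a b ≠ W a' b) :
    ∃ c > 0, ∀ a a', a ≠ a' → c ≤ ∑ b, (W a b - W a' b) ^ 2 := by
  classical
  have hpos : ∀ q : X × X, q.1 ≠ q.2 → 0 < ∑ b, (W q.1 b - W q.2 b) ^ 2 := fun q hq => by
    obtain ⟨b, hb⟩ := hrows q.1 q.2 hq
    exact sum_pos' (fun b _ => sq_nonneg _) ⟨b, mem_univ b, by positivity [sub_ne_zero.2 hb]⟩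
  rcases (univ.filter fun q : X × X => q.1 ≠ q.2).eq_empty_or_nonempty with h | h
  · exact ⟨1, one_pos, fun a a' haa' =>
      absurd (h ▸ mem_filter.2 ⟨mem_univ (a, a'), haa'⟩) (notMem_empty _)⟩
  obtain ⟨q₀, hq₀, hmin⟩ := exists_min_image _ (fun q : X × X => ∑ b, (W q.1 b - W q.2 b) ^ 2) h
  exact ⟨_, hpos q₀ (mem_filter.1 hq₀).2, fun a a' haa' =>
    hmin (a, a') (mem_filter.2 ⟨mem_univ _, haa'⟩)⟩

lemma sum_sq_le_one {Y : Type*} [Fintype Y] {w : Y → ℝ} (hw0 : ∀ b, 0 ≤ w b)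
    (hw1 : ∑ b, w b = 1) : ∑ b, w b ^ 2 ≤ 1 := by
  have hle1 : ∀ b, w b ≤ 1 := fun b => (single_le_sum (fun b _ => hw0 b) (mem_univ b)).trans_eq hw1
  exact (sum_le_sum fun b _ => by nlinarith [hw0 b, hle1 b]).trans_eq hw1

section Channel

variable {X Y : Type*} {n : ℕ} {W : X → Y → ℝ}

def channelProb (W : X → Y → ℝ) (x : Fin n → X) (y : Fin n → Y) : ℝ :=
  ∏ t, W (x t) (y t)

/-- The mean of `jointCount z y a b` when `y` is drawn from `channelProb W x`. -/
def expectedJointCount [DecidableEq X] (W : X → Y → ℝ) (x z : Fin n → X) (a : X) (b : Y) : ℝ :=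
  ∑ t with z t = a, W (x t) b

lemma sum_occCount_mul [Fintype X] [DecidableEq X] (x : Fin n → X) (f : X → ℝ) :
    ∑ a, (occCount x a : ℝ) * f a = ∑ t, f (x t) := by
  simp_rw [occCount, ← nsmul_eq_mul, ← sum_const]
  exact sum_fiberwise' univ x f

lemma sum_jointCount_mul [Fintype X] [Fintype Y] [DecidableEq X] [DecidableEq Y]
    (x : Fin n → X) (y : Fin n → Y) (g : X → Y → ℝ) :
    ∑ a, ∑ b, (jointCount x y a b : ℝ) * g a b = ∑ t, g (x t) (y t) := by
  simp_rw [jointCount, ← nsmul_eq_mul, ← sum_const, ← filter_filter, sum_fiberwise']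
  rw [← sum_fiberwise univ x]
  exact sum_congr rfl fun a _ => sum_congr rfl fun t ht => by rw [(mem_filter.1 ht).2]

lemma expectedJointCount_self [DecidableEq X] (W : X → Y → ℝ) (x : Fin n → X) (a : X) (b : Y) :
    expectedJointCount W x x a b = occCount x a * W a b := by
  rw [expectedJointCount, occCount, ← nsmul_eq_mul, ← sum_const]
  exact sum_congr rfl fun t ht => by rw [(mem_filter.1 ht).2]

lemma sum_sub_mul_eq_sum_expectedJointCount [Fintype X] [Fintype Y] [DecidableEq X]
    (W : X → Y → ℝ) (x x' : Fin n → X) :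
    ∑ t, ∑ b, (W (x' t) b - W (x t) b) * W (x' t) b =
      ∑ a, ∑ b, (occCount x' a * W a b - expectedJointCount W x x' a b) * W a b := by
  simp_rw [expectedJointCount, occCount, ← nsmul_eq_mul, ← sum_const, ← sum_sub_distrib,
    sum_mul]
  rw [← sum_fiberwise univ x']
  refine sum_congr rfl fun a _ => ?_
  rw [sum_comm]
  exact sum_congr rfl fun b _ => sum_congr rfl fun t ht => by rw [(mem_filter.1 ht).2]

lemma sum_channelProb [Fintype Y] (hW1 : ∀ a, ∑ b, W a b = 1) (x : Fin n → X) :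
    ∑ y, channelProb W x y = 1 := by
  simp [channelProb, ← Fintype.prod_sum, hW1]

lemma channelProb_nonneg (hW0 : ∀ a b, 0 ≤ W a b) (x : Fin n → X) (y : Fin n → Y) :
    0 ≤ channelProb W x y :=
  prod_nonneg fun _ _ => hW0 _ _

lemma jointCount_eq_zero_of_channelProb_ne_zero [DecidableEq X] [DecidableEq Y] {x : Fin n → X}
    {y : Fin n → Y} (hQ : channelProb W x y ≠ 0) {a : X} {b : Y} (hab : W a b = 0) :
    jointCount x y a b = 0 := by
  rw [jointCount, card_eq_zero, filter_eq_empty_iff]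
  rintro t - ⟨rfl, rfl⟩
  exact hQ (prod_eq_zero (mem_univ t) hab)

lemma sum_channelProb_le_of_le_abs_jointCount_sub [Fintype Y] [DecidableEq X] [DecidableEq Y]
    (hW0 : ∀ a b, 0 ≤ W a b) (hW1 : ∀ a, ∑ b, W a b = 1) (x z : Fin n → X) (a : X) (b : Y)
    {r : ℝ} (hr : 0 ≤ r) :
    ∑ y with n * r ≤ |(jointCount z y a b : ℝ) - expectedJointCount W x z a b|,
      channelProb W x y ≤ 2 * Real.exp (-2 * n * r ^ 2) := by
  have key := sum_prod_abs_sum_sub_mean_ge_le (fun t => W (x t)) (fun t => hW0 _)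
    (fun t => hW1 _) (fun t c => if z t = a ∧ c = b then 1 else 0)
    (fun t c => by split_ifs <;> simp) (mul_nonneg n.cast_nonneg hr)
  have hdev : ∀ y : Fin n → Y, ∑ t, ((if z t = a ∧ y t = b then (1 : ℝ) else 0) -
      ∑ c, W (x t) c * if z t = a ∧ c = b then 1 else 0) =
      jointCount z y a b - expectedJointCount W x z a b := fun y => by
    rw [sum_sub_distrib, sum_boole]
    simp [expectedJointCount, jointCount, sum_filter, ite_and]
  simp_rw [hdev, Fintype.card_fin] at key
  refine key.trans_eq ?_
  rcases eq_or_ne (n : ℝ) 0 with hn | hn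
  · simp [hn]
  · field_simp

lemma abs_div_sub_div_mul_le_iff (hn : 0 < n) {J O w δ : ℝ} :
    |J / n - O / n * w| ≤ δ ↔ |J - O * w| ≤ n * δ := by
  have : J / n - O / n * w = (J - O * w) / n := by ring
  rw [this, abs_div, Nat.abs_cast, div_le_iff₀ (by positivity), mul_comm δ]

lemma abs_jointCount_sub_le_of_mem_condTypicalSet [DecidableEq X] [DecidableEq Y] (hn : 0 < n)
    {δ : ℝ} {x : Fin n → X} {y : Fin n → Y} (hy : y ∈ condTypicalSet W δ x) (a : X) (b : Y) :
    |(jointCount x y a b : ℝ) - occCount x a * W a b| ≤ n * δ :=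
  (abs_div_sub_div_mul_le_iff hn).1 (hy a b).1

lemma exists_le_abs_jointCount_sub_of_notMem_condTypicalSet [DecidableEq X] [DecidableEq Y]
    (hn : 0 < n) {δ : ℝ} {x : Fin n → X} {y : Fin n → Y} (hy : y ∉ condTypicalSet W δ x)
    (hQ : channelProb W x y ≠ 0) :
    ∃ a b, n * δ ≤ |(jointCount x y a b : ℝ) - expectedJointCount W x x a b| := by
  simp only [condTypicalSet, Set.mem_ofPred_eq, not_forall] at hy
  obtain ⟨a, b, hab⟩ := hy
  refine ⟨a, b, ?_⟩
  rw [expectedJointCount_self]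
  by_contra! hlt
  exact hab ⟨(abs_div_sub_div_mul_le_iff hn).2 hlt.le,
    jointCount_eq_zero_of_channelProb_ne_zero hQ⟩

lemma one_sub_le_sum_channelProb_condTypicalSet [Fintype X] [Fintype Y] [DecidableEq X]
    [DecidableEq Y] (hW0 : ∀ a b, 0 ≤ W a b) (hW1 : ∀ a, ∑ b, W a b = 1) (hn : 0 < n)
    (x : Fin n → X) {δ : ℝ} (hδ : 0 ≤ δ) [DecidablePred (· ∈ condTypicalSet W δ x)] :
    1 - 2 * Fintype.card X * Fintype.card Y * Real.exp (-2 * n * δ ^ 2) ≤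
      ∑ y with y ∈ condTypicalSet W δ x, channelProb W x y := by
  have hcompl : ∑ y with y ∉ condTypicalSet W δ x, channelProb W x y ≤
      2 * Fintype.card X * Fintype.card Y * Real.exp (-2 * n * δ ^ 2) :=
    calc ∑ y with y ∉ condTypicalSet W δ x, channelProb W x y
        ≤ ∑ ab : X × Y, ∑ y with n * δ ≤
            |(jointCount x y ab.1 ab.2 : ℝ) - expectedJointCount W x x ab.1 ab.2|,
            channelProb W x y :=
          sum_filter_le_sum_sum_filter (channelProb_nonneg hW0 x) univ fun y hy hQ => by
            obtain ⟨a, b, h⟩ := exists_le_abs_jointCount_sub_of_notMem_condTypicalSet hn hy hQ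
            exact ⟨(a, b), mem_univ _, h⟩
      _ ≤ ∑ _ab : X × Y, 2 * Real.exp (-2 * n * δ ^ 2) :=
          sum_le_sum fun ab _ =>
            sum_channelProb_le_of_le_abs_jointCount_sub hW0 hW1 x x ab.1 ab.2 hδ
      _ = _ := by
          rw [sum_const, card_univ, Fintype.card_prod, nsmul_eq_mul, Nat.cast_mul]
          ring
  have htotal := sum_filter_add_sum_filter_not univ (· ∈ condTypicalSet W δ x) (channelProb W x)
  rw [sum_channelProb hW1] at htotal
  linarith

lemma exists_channelProb_mem_Icc [Fintype X] [Fintype Y] [DecidableEq X] [DecidableEq Y]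
    (hW0 : ∀ a b, 0 ≤ W a b) (hn : 0 < n) (x : Fin n → X) (δ : ℝ) :
    ∃ H : ℝ, ∀ y ∈ condTypicalSet W δ x, channelProb W x y ∈
      Set.Icc (Real.exp (H - n * δ * ∑ a, ∑ b, |Real.log (W a b)|))
        (Real.exp (H + n * δ * ∑ a, ∑ b, |Real.log (W a b)|)) := by
  refine ⟨∑ a, ∑ b, (occCount x a : ℝ) * W a b * Real.log (W a b), fun y hy => ?_⟩
  have hpos : ∀ t, 0 < W (x t) (y t) := fun t => (hW0 _ _).lt_of_ne fun h => by
    have := (hy (x t) (y t)).2 h.symm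
    rw [jointCount, card_eq_zero, filter_eq_empty_iff] at this
    exact this (mem_univ t) ⟨rfl, rfl⟩
  have hQ : 0 < channelProb W x y := prod_pos fun t _ => hpos t
  have hlog : Real.log (channelProb W x y) =
      ∑ a, ∑ b, (jointCount x y a b : ℝ) * Real.log (W a b) := by
    rw [channelProb, Real.log_prod fun t _ => (hpos t).ne', sum_jointCount_mul]
  have hdev : |Real.log (channelProb W x y) -
      ∑ a, ∑ b, (occCount x a : ℝ) * W a b * Real.log (W a b)| ≤
      n * δ * ∑ a, ∑ b, |Real.log (W a b)| := by
    rw [hlog, ← sum_sub_distrib, mul_sum]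
    refine (abs_sum_le_sum_abs _ _).trans (sum_le_sum fun a _ => ?_)
    rw [← sum_sub_distrib, mul_sum]
    refine (abs_sum_le_sum_abs _ _).trans (sum_le_sum fun b _ => ?_)
    rw [← sub_mul, abs_mul]
    exact mul_le_mul_of_nonneg_right
      (abs_jointCount_sub_le_of_mem_condTypicalSet hn hy a b) (abs_nonneg _)
  rw [abs_le] at hdev
  rw [Set.mem_Icc, ← Real.le_log_iff_exp_le hQ, ← Real.log_le_iff_le_exp hQ]
  constructor <;> linarith

lemma mul_hammingDist_le [Fintype X] [Fintype Y] [DecidableEq X] (hW0 : ∀ a b, 0 ≤ W a b)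
    (hW1 : ∀ a, ∑ b, W a b = 1) {c : ℝ} (hc : ∀ a a', a ≠ a' → c ≤ ∑ b, (W a b - W a' b) ^ 2)
    (x x' : Fin n → X) :
    c * hammingDist x x' ≤ ∑ a, |(occCount x a : ℝ) - occCount x' a| +
      2 * ∑ a, ∑ b, |occCount x' a * W a b - expectedJointCount W x x' a b| * W a b := by
  calc c * hammingDist x x' = ∑ t, if x t ≠ x' t then c else 0 := by
        rw [hammingDist, ← sum_filter, sum_const, nsmul_eq_mul, mul_comm]
    _ ≤ ∑ t, ∑ b, (W (x t) b - W (x' t) b) ^ 2 := sum_le_sum fun t _ => by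
        split_ifs with h
        exacts [hc _ _ h, sum_nonneg fun b _ => sq_nonneg _]
    _ = (∑ t, ∑ b, W (x t) b ^ 2 - ∑ t, ∑ b, W (x' t) b ^ 2) +
        2 * ∑ t, ∑ b, (W (x' t) b - W (x t) b) * W (x' t) b := by
        rw [mul_sum, ← sum_sub_distrib, ← sum_add_distrib]
        refine sum_congr rfl fun t _ => ?_
        rw [mul_sum, ← sum_sub_distrib, ← sum_add_distrib]
        exact sum_congr rfl fun b _ => by ring
    _ = ∑ a, ((occCount x a : ℝ) - occCount x' a) * ∑ b, W a b ^ 2 +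
        2 * ∑ a, ∑ b, (occCount x' a * W a b - expectedJointCount W x x' a b) * W a b := by
        rw [sum_sub_mul_eq_sum_expectedJointCount, ← sum_occCount_mul x (fun a => ∑ b, W a b ^ 2),
          ← sum_occCount_mul x' (fun a => ∑ b, W a b ^ 2), ← sum_sub_distrib]
        simp only [sub_mul]
    _ ≤ _ := by
        refine add_le_add (sum_le_sum fun a _ => ?_)
          (mul_le_mul_of_nonneg_left (sum_le_sum fun a _ => sum_le_sum fun b _ =>
            mul_le_mul_of_nonneg_right (le_abs_self _) (hW0 a b)) two_pos.le)
        calc ((occCount x a : ℝ) - occCount x' a) * ∑ b, W a b ^ 2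
            ≤ |(occCount x a : ℝ) - occCount x' a| * ∑ b, W a b ^ 2 :=
              mul_le_mul_of_nonneg_right (le_abs_self _) (sum_nonneg fun b _ => sq_nonneg _)
          _ ≤ |(occCount x a : ℝ) - occCount x' a| :=
              mul_le_of_le_one_right (abs_nonneg _) (sum_sq_le_one (hW0 a) (hW1 a))

lemma exists_le_abs_sub_expectedJointCount [Fintype X] [Fintype Y] [DecidableEq X]
    (hW0 : ∀ a b, 0 ≤ W a b) (hW1 : ∀ a, ∑ b, W a b = 1) {c : ℝ}
    (hc : ∀ a a', a ≠ a' → c ≤ ∑ b, (W a b - W a' b) ^ 2) (x x' : Fin n → X) {γ : ℝ}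
    (h : ∑ a, |(occCount x a : ℝ) - occCount x' a| + 2 * n * γ * Fintype.card X <
      c * hammingDist x x') :
    ∃ a b, n * γ ≤ |occCount x' a * W a b - expectedJointCount W x x' a b| := by
  by_contra! hlt
  have hsum : ∑ a, ∑ b, |occCount x' a * W a b - expectedJointCount W x x' a b| * W a b ≤
      n * γ * Fintype.card X :=
    calc _ ≤ ∑ a : X, ∑ b, n * γ * W a b :=
          sum_le_sum fun a _ => sum_le_sum fun b _ =>
            mul_le_mul_of_nonneg_right (hlt a b).le (hW0 a b)
      _ = n * γ * Fintype.card X := by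
          simp only [← mul_sum, hW1, mul_one, sum_const, card_univ, nsmul_eq_mul]
          ring
  linarith [mul_hammingDist_le hW0 hW1 hc x x']

lemma abs_occCount_sub_le_of_mem_typicalSet [DecidableEq X] {p : X → ℝ} (hp0 : ∀ a, 0 ≤ p a)
    (hn : 0 < n) {δ : ℝ} (hδ : 0 ≤ δ) {x x' : Fin n → X} (hx : x ∈ typicalSet p δ n)
    (hx' : x' ∈ typicalSet p δ n) (a : X) :
    |(occCount x a : ℝ) - occCount x' a| ≤ 2 * n * δ := by
  rcases (hp0 a).eq_or_lt with hpa | hpa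
  · simp only [(hx a).2 hpa.symm, (hx' a).2 hpa.symm, sub_self, abs_zero]
    positivity
  have hnR : (0 : ℝ) < n := by positivity
  calc |(occCount x a : ℝ) - occCount x' a|
      = n * |(occCount x a / n - p a) - (occCount x' a / n - p a)| := by
        rw [← abs_of_pos hnR, ← abs_mul, abs_of_pos hnR]
        congr 1
        field_simp
        ring
    _ ≤ n * (δ + δ) := by
        gcongr
        exact (abs_sub _ _).trans (add_le_add ((hx a).1 hpa) ((hx' a).1 hpa))
    _ = 2 * n * δ := by ring

lemma exists_le_abs_sub_expectedJointCount_of_mem_typicalSet [Fintype X] [Fintype Y]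
    [DecidableEq X] (hW0 : ∀ a b, 0 ≤ W a b) (hW1 : ∀ a, ∑ b, W a b = 1) {c : ℝ} (hc0 : 0 ≤ c)
    (hc : ∀ a a', a ≠ a' → c ≤ ∑ b, (W a b - W a' b) ^ 2) {p : X → ℝ} (hp0 : ∀ a, 0 ≤ p a)
    (hn : 0 < n) {ε γ δ : ℝ} (hγ : 4 * γ * (Fintype.card X + 1) = c * ε) (hγ0 : 0 < γ)
    (hδ0 : 0 ≤ δ) (hδγ : δ ≤ γ / 2) {x x' : Fin n → X} (hx : x ∈ typicalSet p δ n)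
    (hx' : x' ∈ typicalSet p δ n) (hham : n * ε ≤ hammingDist x x') :
    ∃ a b, n * γ ≤ |occCount x' a * W a b - expectedJointCount W x x' a b| := by
  have hocc : ∀ a, |(occCount x a : ℝ) - occCount x' a| ≤ n * γ := fun a =>
    (abs_occCount_sub_le_of_mem_typicalSet hp0 hn hδ0 hx hx' a).trans
      (by nlinarith [mul_le_mul_of_nonneg_left hδγ (n.cast_nonneg : (0 : ℝ) ≤ n)])
  have hnγ : 0 < n * γ := by positivity
  refine exists_le_abs_sub_expectedJointCount hW0 hW1 hc x x' ?_
  calc ∑ a, |(occCount x a : ℝ) - occCount x' a| + 2 * n * γ * Fintype.card X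
      ≤ ∑ _a : X, n * γ + 2 * n * γ * Fintype.card X := by gcongr with a; exact hocc a
    _ < 4 * (n * γ) * (Fintype.card X + 1) := by
        rw [sum_const, card_univ, nsmul_eq_mul]
        nlinarith
    _ = c * (n * ε) := by linear_combination n * hγ
    _ ≤ c * hammingDist x x' := by gcongr

lemma le_abs_jointCount_sub_of_mem_condTypicalSet [DecidableEq X] [DecidableEq Y] (hn : 0 < n)
    {x x' : Fin n → X} {y : Fin n → Y} {δ γ : ℝ} (hδγ : δ ≤ γ / 2) {a : X} {b : Y}
    (hfar : n * γ ≤ |occCount x' a * W a b - expectedJointCount W x x' a b|)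
    (hy : y ∈ condTypicalSet W δ x') :
    n * (γ / 2) ≤ |(jointCount x' y a b : ℝ) - expectedJointCount W x x' a b| := by
  have h1 := abs_jointCount_sub_le_of_mem_condTypicalSet hn hy a b
  have h2 := abs_sub_le (occCount x' a * W a b) (jointCount x' y a b : ℝ)
    (expectedJointCount W x x' a b)
  have h3 : n * δ ≤ n * (γ / 2) := by gcongr
  rw [abs_sub_comm] at h1
  linarith

lemma ncard_inter_condTypicalSet_le [Fintype X] [Fintype Y] [DecidableEq X] [DecidableEq Y]
    (hW0 : ∀ a b, 0 ≤ W a b) (hW1 : ∀ a, ∑ b, W a b = 1) (hn : 0 < n) {x x' : Fin n → X}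
    {δ γ : ℝ} (hδ : 0 ≤ δ) (hδγ : δ ≤ γ / 2)
    (hmass : 4 * Fintype.card X * Fintype.card Y * Real.exp (-2 * n * δ ^ 2) ≤ 1) {a : X} {b : Y}
    (hfar : n * γ ≤ |occCount x' a * W a b - expectedJointCount W x x' a b|) :
    ((condTypicalSet W δ x ∩ condTypicalSet W δ x').ncard : ℝ) ≤
      4 * Real.exp (-n * γ ^ 2 / 2 + 2 * n * δ * ∑ a, ∑ b, |Real.log (W a b)|) *
        (condTypicalSet W δ x).ncard := by
  classical
  obtain ⟨H, hH⟩ := exists_channelProb_mem_Icc hW0 hn x δ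
  have hcard := card_le_of_sum_bounds (Q := channelProb W x)
    (S := univ.filter (· ∈ condTypicalSet W δ x ∩ condTypicalSet W δ x'))
    (T := univ.filter (· ∈ condTypicalSet W δ x))
    (fun y hy => by simp only [mem_filter, mem_univ, true_and] at hy ⊢; exact hy.1)
    (Real.exp_pos _) (fun y hy => hH y (mem_filter.1 hy).2)
    (by linarith [one_sub_le_sum_channelProb_condTypicalSet hW0 hW1 hn x hδ])
    ((sum_le_sum_of_subset_of_nonneg (fun y hy => by
        simp only [mem_filter, mem_univ, true_and] at hy ⊢
        exact le_abs_jointCount_sub_of_mem_condTypicalSet hn hδγ hfar hy.2)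
      fun y _ _ => channelProb_nonneg hW0 x y).trans
      (sum_channelProb_le_of_le_abs_jointCount_sub hW0 hW1 x x' a b (r := γ / 2) (by linarith)))
  simp only [← Set.ncard_coe_finset, coe_filter, mem_univ, true_and, Set.ofPred_mem_eq] at hcard
  refine hcard.trans_eq ?_
  have hexp : ∀ u v : ℝ, 2 * (2 * Real.exp u) * Real.exp v = 4 * Real.exp (u + v) := fun u v => by
    rw [Real.exp_add]
    ring
  rw [← Real.exp_sub, hexp]
  congr 3
  ring

lemma eventually_ncard_inter_condTypicalSet_le [Fintype X] [Fintype Y] [DecidableEq X]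
    [DecidableEq Y] (hW0 : ∀ a b, 0 ≤ W a b) (hW1 : ∀ a, ∑ b, W a b = 1) {c : ℝ} (hc0 : 0 ≤ c)
    (hc : ∀ a a', a ≠ a' → c ≤ ∑ b, (W a b - W a' b) ^ 2) {p : X → ℝ} (hp0 : ∀ a, 0 ≤ p a)
    {ε γ δ : ℝ} (hγ : 4 * γ * (Fintype.card X + 1) = c * ε) (hγ0 : 0 < γ) (hδ0 : 0 < δ)
    (hδγ : δ ≤ γ / 2) (hδC : 2 * δ * ∑ a, ∑ b, |Real.log (W a b)| ≤ γ ^ 2 / 8) :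
    ∀ᶠ n : ℕ in atTop, ∀ x x' : Fin n → X, x ∈ typicalSet p δ n → x' ∈ typicalSet p δ n →
      (n : ℝ) * ε ≤ hammingDist x x' →
      ((condTypicalSet W δ x ∩ condTypicalSet W δ x').ncard : ℝ) ≤
        Real.exp (-(n : ℝ) * (γ ^ 2 / 4)) * (condTypicalSet W δ x).ncard := by
  filter_upwards [eventually_gt_atTop 0,
    eventually_mul_exp_neg_le (4 * Fintype.card X * Fintype.card Y) (by positivity : 0 < 2 * δ ^ 2)
      one_pos,
    eventually_mul_exp_neg_le 4 (by positivity : 0 < γ ^ 2 / 8) one_pos]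
    with n hn hmass hlarge x x' hx hx' hham
  obtain ⟨a, b, hfar⟩ := exists_le_abs_sub_expectedJointCount_of_mem_typicalSet hW0 hW1 hc0 hc
    hp0 hn hγ hγ0 hδ0.le hδγ hx hx' hham
  refine (ncard_inter_condTypicalSet_le hW0 hW1 hn hδ0.le hδγ (by convert hmass using 3; ring)
    hfar).trans (mul_le_mul_of_nonneg_right ?_ (by positivity))
  calc 4 * Real.exp (-n * γ ^ 2 / 2 + 2 * n * δ * ∑ a, ∑ b, |Real.log (W a b)|)
      ≤ 4 * Real.exp (-(n * (γ ^ 2 / 8)) + -n * (γ ^ 2 / 4)) := by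
        gcongr ?_ * Real.exp ?_
        nlinarith [mul_le_mul_of_nonneg_left hδC (n.cast_nonneg : (0 : ℝ) ≤ n)]
    _ = 4 * Real.exp (-(n * (γ ^ 2 / 8))) * Real.exp (-n * (γ ^ 2 / 4)) := by
        rw [Real.exp_add, mul_assoc]
    _ ≤ Real.exp (-n * (γ ^ 2 / 4)) := mul_le_of_le_one_left (Real.exp_pos _).le hlarge

end Channel

theorem cond_type_class_intersection_general
    {X Y : Type*} [Fintype X] [Fintype Y] [DecidableEq X] [DecidableEq Y]
    (W : X → Y → ℝ) (hW0 : ∀ x y, 0 ≤ W x y) (hW1 : ∀ x, ∑ y, W x y = 1)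
    (hrows : ∀ x x' : X, x ≠ x' → ∃ y, W x y ≠ W x' y)
    (p : X → ℝ) (hp0 : ∀ x, 0 ≤ p x)
    (ε : ℝ) (hε : 0 < ε) :
    ∃ L : ℝ, 0 < L ∧ ∃ δ₀ : ℝ, 0 < δ₀ ∧ ∀ δ : ℝ, δ ∈ Set.Ioc (0 : ℝ) δ₀ →
      ∃ N : ℕ, ∀ n ≥ N, ∀ x x' : Fin n → X,
        x ∈ typicalSet p δ n → x' ∈ typicalSet p δ n →
        (n : ℝ) * ε ≤ (hammingDist x x' : ℝ) →
        ((condTypicalSet W δ x ∩ condTypicalSet W δ x').ncard : ℝ) ≤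
          Real.exp (-(n : ℝ) * L) * ((condTypicalSet W δ x).ncard : ℝ) := by
  obtain ⟨c, hc0, hc⟩ := exists_pos_le_sum_sq_sub hrows
  set C := ∑ a, ∑ b, |Real.log (W a b)|
  have hC : 0 ≤ C := sum_nonneg fun a _ => sum_nonneg fun b _ => abs_nonneg _
  set γ := c * ε / (4 * (Fintype.card X + 1))
  have hγ0 : 0 < γ := by positivity
  have hγ : 4 * γ * (Fintype.card X + 1) = c * ε := by
    simp only [γ]
    field_simp
  refine ⟨γ ^ 2 / 4, by positivity, min (γ / 2) (γ ^ 2 / (16 * (C + 1))), by positivity, ?_⟩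
  rintro δ ⟨hδ0, hδ⟩
  have hδC : 2 * δ * C ≤ γ ^ 2 / 8 := by
    have := hδ.trans (min_le_right _ _)
    rw [le_div_iff₀ (by positivity)] at this
    nlinarith
  exact eventually_atTop.1 (eventually_ncard_inter_condTypicalSet_le hW0 hW1 hc0.le hc hp0 hγ hγ0
    hδ0 (hδ.trans (min_le_left _ _)) hδC)

/-- Conditional type-class intersection lemma: if the rows of `W` are pairwise distinct, then for
typical `x^n, x'^n` at Hamming distance at least `nε`, the conditionally typical sets satisfy
`|T_δ(W|x^n) ∩ T_δ(W|x'^n)| ≤ e^{−nL(ε)} |T_δ(W|x^n)|`. -/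
theorem cond_type_class_intersection
    {X Y : Type*} [Fintype X] [Fintype Y] [DecidableEq X] [DecidableEq Y]
    (W : X → Y → ℝ) (hW0 : ∀ x y, 0 ≤ W x y) (hW1 : ∀ x, ∑ y, W x y = 1)
    (hrows : ∀ x x' : X, x ≠ x' → ∃ y, W x y ≠ W x' y)
    (p : X → ℝ) (hp0 : ∀ x, 0 ≤ p x) (hp1 : ∑ x, p x = 1)
    (ε : ℝ) (hε : 0 < ε) :
    ∃ L : ℝ, 0 < L ∧ ∃ δ₀ : ℝ, 0 < δ₀ ∧ ∀ δ : ℝ, δ ∈ Set.Ioc (0 : ℝ) δ₀ →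
      ∃ N : ℕ, ∀ n ≥ N, ∀ x x' : Fin n → X,
        x ∈ typicalSet p δ n → x' ∈ typicalSet p δ n →
        (n : ℝ) * ε ≤ (hammingDist x x' : ℝ) →
        ((condTypicalSet W δ x ∩ condTypicalSet W δ x').ncard : ℝ) ≤
          Real.exp (-(n : ℝ) * L) * ((condTypicalSet W δ x).ncard : ℝ) :=
  cond_type_class_intersection_general W hW0 hW1 hrows p hp0 ε hε
end
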